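/- arXiv:1106.4280 — 2 statements merged into one kernel-verified Lean document; each statement's English description precedes it below -/
import Mathlib

section
/- Let (H,H⁺) be a simple dimension group given as the direct limit of Z^{k_0} → Z^{k_1} → ⋯ with positive integer matrices M_n. For every element z = (z_n)_n of the inverse limit of (R⁺)^{k_0} ← (R⁺)^{k_1} ← ⋯ with maps M_n^T, the function φ_z(([v,n])) = ⟨v, z_n⟩ is a well-defined group homomorphism H → R with φ_z(H⁺) ⊆ R⁺. Conversely, every group homomorphism φ: H → R with φ(H⁺) ⊆ R⁺ equals φ_z for a unique z in the inverse limit. -/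
noncomputable section

/-- The single-step homomorphism `ℤ^{k n} → ℤ^{k (n+1)}`, `v ↦ M n • v`. -/
def stepHom (k : ℕ → ℕ) (M : ∀ n, Matrix (Fin (k (n + 1))) (Fin (k n)) ℤ) (n : ℕ) :
    (Fin (k n) → ℤ) →+ (Fin (k (n + 1)) → ℤ) :=
  (M n).mulVecLin.toAddMonoidHom

/-- The transition homomorphisms of the directed system `(ℤ^{k n}, M n)`. -/
def sysHom (k : ℕ → ℕ) (M : ∀ n, Matrix (Fin (k (n + 1))) (Fin (k n)) ℤ) :
    ∀ i j : ℕ, i ≤ j → (Fin (k i) → ℤ) →+ (Fin (k j) → ℤ) :=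
  fun _ _ h => Nat.leRecOn h (fun {m} g => (stepHom k M m).comp g) (AddMonoidHom.id _)

/-- The direct limit `H = lim→ (ℤ^{k n}, M n)`. -/
abbrev DimGroup (k : ℕ → ℕ) (M : ∀ n, Matrix (Fin (k (n + 1))) (Fin (k n)) ℤ) : Type _ :=
  AddCommGroup.DirectLimit (fun n => Fin (k n) → ℤ) (sysHom k M)

/-- The canonical map `[·, n] : ℤ^{k n} → H`. -/
abbrev dgOf (k : ℕ → ℕ) (M : ∀ n, Matrix (Fin (k (n + 1))) (Fin (k n)) ℤ) (n : ℕ) :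
    (Fin (k n) → ℤ) →+ DimGroup k M :=
  AddCommGroup.DirectLimit.of (fun n => Fin (k n) → ℤ) (sysHom k M) n

/-- The positive cone `H⁺ = {[v,n] : v ∈ (ℤ⁺)^{k n}}`. -/
def posCone (k : ℕ → ℕ) (M : ∀ n, Matrix (Fin (k (n + 1))) (Fin (k n)) ℤ) :
    Set (DimGroup k M) :=
  {h | ∃ (n : ℕ) (v : Fin (k n) → ℤ), (∀ i, 0 ≤ v i) ∧ h = dgOf k M n v}

lemma sysHom_self (k : ℕ → ℕ) (M : ∀ n, Matrix (Fin (k (n + 1))) (Fin (k n)) ℤ) (n : ℕ)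
    (h : n ≤ n) (v : Fin (k n) → ℤ) : sysHom k M n n h v = v := by
  simp [sysHom, Nat.leRecOn_self]

lemma sysHom_succ' (k : ℕ → ℕ) (M : ∀ n, Matrix (Fin (k (n + 1))) (Fin (k n)) ℤ)
    {i j : ℕ} (h' : i ≤ j + 1) (h : i ≤ j) (v : Fin (k i) → ℤ) :
    sysHom k M i (j + 1) h' v = (M j).mulVec (sysHom k M i j h v) := by
  have : sysHom k M i (j + 1) h'
      = (stepHom k M j).comp (sysHom k M i j h) :=
    Nat.leRecOn_succ (C := fun j => (Fin (k i) → ℤ) →+ (Fin (k j) → ℤ)) h (AddMonoidHom.id _)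
  rw [this]
  rfl

theorem stmt7 (k : ℕ → ℕ) (hk : ∀ n, 0 < k n)
    (M : ∀ n, Matrix (Fin (k (n + 1))) (Fin (k n)) ℤ)
    (hpos : ∀ n i j, 0 < M n i j) :
    (∀ z : ∀ n, Fin (k n) → ℝ,
      (∀ n i, 0 ≤ z n i) →
      (∀ n, z n = ((M n).transpose.map (Int.cast : ℤ → ℝ)).mulVec (z (n + 1))) →
      ∃ φ : DimGroup k M →+ ℝ,
        (∀ (n : ℕ) (v : Fin (k n) → ℤ), φ (dgOf k M n v) = ∑ i, (v i : ℝ) * z n i) ∧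
        (∀ h ∈ posCone k M, 0 ≤ φ h)) ∧
    (∀ φ : DimGroup k M →+ ℝ, (∀ h ∈ posCone k M, 0 ≤ φ h) →
      ∃! z : ∀ n, Fin (k n) → ℝ,
        (∀ n i, 0 ≤ z n i) ∧
        (∀ n, z n = ((M n).transpose.map (Int.cast : ℤ → ℝ)).mulVec (z (n + 1))) ∧
        (∀ (n : ℕ) (v : Fin (k n) → ℤ), φ (dgOf k M n v) = ∑ i, (v i : ℝ) * z n i)) := by
  classical
  constructor
  · -- Part 1: from z in the inverse limit to a positive homomorphism
    intro z hz hrec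
    set g : ∀ n, (Fin (k n) → ℤ) →+ ℝ := fun n =>
      { toFun := fun v => ∑ i, (v i : ℝ) * z n i
        map_zero' := by simp
        map_add' := fun v w => by
          simp [add_mul, Finset.sum_add_distrib] } with hgdef
    have hzn : ∀ n j, z n j = ∑ i, (M n i j : ℝ) * z (n + 1) i := by
      intro n j
      conv_lhs => rw [hrec n]
      simp [Matrix.mulVec, dotProduct, Matrix.transpose_apply, Matrix.map_apply]
    have step : ∀ n (w : Fin (k n) → ℤ), g (n + 1) ((M n).mulVec w) = g n w := by
      intro n w
      have cast_mv : ∀ i, (((M n).mulVec w) i : ℝ) = ∑ j, (M n i j : ℝ) * (w j : ℝ) := by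
        intro i
        simp [Matrix.mulVec, dotProduct]
      show (∑ i, (((M n).mulVec w) i : ℝ) * z (n + 1) i) = ∑ j, (w j : ℝ) * z n j
      calc ∑ i, (((M n).mulVec w) i : ℝ) * z (n + 1) i
          = ∑ i, ∑ j, (w j : ℝ) * ((M n i j : ℝ) * z (n + 1) i) := by
            refine Finset.sum_congr rfl fun i _ => ?_
            rw [cast_mv, Finset.sum_mul]
            exact Finset.sum_congr rfl fun j _ => by ring
        _ = ∑ j, (w j : ℝ) * z n j := by
            rw [Finset.sum_comm]
            refine Finset.sum_congr rfl fun j _ => ?_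
            rw [← Finset.mul_sum, hzn n j]
    have Hg : ∀ i j (hij : i ≤ j) (x : Fin (k i) → ℤ),
        g j (sysHom k M i j hij x) = g i x := by
      intro i j hij x
      induction j, hij using Nat.le_induction with
      | base => rw [sysHom_self]
      | succ j hij ih =>
          rw [sysHom_succ' k M _ hij, step]
          exact ih
    refine ⟨AddCommGroup.DirectLimit.lift _ _ ℝ g Hg, ?_, ?_⟩
    · intro n v
      exact AddCommGroup.DirectLimit.lift_of ℝ g Hg n v
    · rintro h ⟨n, v, hv, rfl⟩
      rw [show ((dgOf k M n) v) = AddCommGroup.DirectLimit.of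
          (fun n => Fin (k n) → ℤ) (sysHom k M) n v from rfl,
        AddCommGroup.DirectLimit.lift_of]
      show (0:ℝ) ≤ ∑ i, (v i : ℝ) * z n i
      refine Finset.sum_nonneg fun i _ => mul_nonneg ?_ (hz n i)
      exact_mod_cast hv i
  · -- Part 2: every positive homomorphism comes from a unique z
    intro φ hφ
    set z : ∀ n, Fin (k n) → ℝ := fun n i => φ (dgOf k M n (Pi.single i 1)) with hzdef
    have hformula : ∀ n (v : Fin (k n) → ℤ), φ (dgOf k M n v) = ∑ i, (v i : ℝ) * z n i := by
      intro n v
      have hv : v = ∑ i, v i • Pi.single i (1 : ℤ) := by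
        funext j
        simp [Pi.single_apply, Finset.sum_apply]
      conv_lhs => rw [hv]
      rw [map_sum, map_sum]
      refine Finset.sum_congr rfl fun i _ => ?_
      rw [map_zsmul, map_zsmul, zsmul_eq_mul]
    have hnn : ∀ n i, 0 ≤ z n i := by
      intro n i
      exact hφ _ ⟨n, Pi.single i 1, fun j => by
        simp [Pi.single_apply]; split <;> simp, rfl⟩
    have hrec : ∀ n, z n = ((M n).transpose.map (Int.cast : ℤ → ℝ)).mulVec (z (n + 1)) := by
      intro n
      funext i
      have h1 : dgOf k M n (Pi.single i 1)
          = dgOf k M (n + 1) (sysHom k M n (n + 1) (Nat.le_succ n) (Pi.single i 1)) :=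
        (AddCommGroup.DirectLimit.of_f (G := fun n => Fin (k n) → ℤ) (f := sysHom k M)
          (Nat.le_succ n) (Pi.single i 1)).symm
      have h2 : sysHom k M n (n + 1) (Nat.le_succ n) (Pi.single i 1)
          = (M n).mulVec (Pi.single i 1) := by
        rw [sysHom_succ' k M _ le_rfl, sysHom_self]
      have h3 : (M n).mulVec (Pi.single i 1) = fun j => M n j i := by
        funext j
        simp [Matrix.mulVec, dotProduct, Pi.single_apply]
      have : z n i = ∑ j, (M n j i : ℝ) * z (n + 1) j := by
        rw [hzdef]
        simp only
        rw [h1, h2, h3, hformula]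
      rw [this]
      simp [Matrix.mulVec, dotProduct, Matrix.transpose_apply, Matrix.map_apply]
    refine ⟨z, ⟨hnn, hrec, hformula⟩, ?_⟩
    rintro z' ⟨_, _, h3⟩
    funext n i
    have := h3 n (Pi.single i 1)
    rw [hformula] at this
    have l : ∀ (w : Fin (k n) → ℝ), (∑ j, ((Pi.single i (1 : ℤ) : Fin (k n) → ℤ) j : ℝ) * w j)
        = w i := by
      intro w
      rw [Finset.sum_eq_single i]
      · simp
      · intro j _ hj; simp [Pi.single_apply, hj]
      · simp
    rw [l, l] at this
    exact this.symm
end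
end

section
/- Let K be a finite dimensional metrizable Choquet simplex with exactly d ≥ 1 extreme points (i.e., a (d−1)-dimensional simplex), let (p_n)_{n≥0} be an increasing sequence of positive integers with p_n | p_{n+1}, and let k ≥ max{2,d}. Then there exist an increasing subsequence (n_i)_{i≥0} and a sequence (M_i)_{i≥0} of k×k positive integer matrices managed by (p_{n_i})_{i≥0} such that K is affinely homeomorphic to the inverse limit lim← (Δ(k, p_{n_i}), M_i). -/
/-- The simplex `Δ(k,p) = {v ∈ (ℝ⁺)^k : Σ v_i = 1/p}`. -/
def simplexSet (k : ℕ) (p : ℕ) : Set (Fin k → ℝ) :=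
  {v | (∀ i, 0 ≤ v i) ∧ (∑ i, v i) = 1 / (p : ℝ)}

/-- The sequence of positive integer matrices `(M n)` is managed by the
increasing sequence `(p n)`. -/
def IsManaged (p : ℕ → ℕ) (k : ℕ → ℕ)
    (M : ∀ n, Matrix (Fin (k n)) (Fin (k (n + 1))) ℤ) : Prop :=
  (∀ n, 0 < p n) ∧ StrictMono p ∧ (∀ n, p n ∣ p (n + 1)) ∧
  (∀ n, 2 ≤ k n) ∧ (∀ n i j, 0 < M n i j) ∧
  (∀ n j, (∑ i, M n i j) * (p n : ℤ) = (p (n + 1) : ℤ))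

/-- The sets `S ⊆ E` and `T ⊆ F` are affinely homeomorphic. -/
def AffinelyHomeomorphic {E F : Type*}
    [AddCommGroup E] [Module ℝ E] [TopologicalSpace E]
    [AddCommGroup F] [Module ℝ F] [TopologicalSpace F]
    (S : Set E) (T : Set F) : Prop :=
  ∃ f : S ≃ₜ T, ∀ (x y z : S) (t : ℝ), 0 ≤ t → t ≤ 1 →
    (z : E) = t • (x : E) + (1 - t) • (y : E) →
    (f z : F) = t • (f x : F) + (1 - t) • (f y : F)

/-!
Write `q_i = p_{n_i}` for the subsequence. Let `σ` be an idempotent map of `Fin k` onto a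
`d`-element subset, `E` the 0/1 matrix that adds up the coordinates in each fibre of `σ`, and
`M_i = a_i E + J` with `J` the all-ones matrix and `a_i = q_{i+1}/q_i - k`, so that the columns of
`M_i` sum to `q_{i+1}/q_i`. On `Δ(k, q_{i+1})` one has `M_i v = a_i E v + q_{i+1}⁻¹ 𝟙`, hence a
thread `(v_i)` is determined by `y_i = E v_i`, which satisfies `y_i = a_i y_{i+1} + q_{i+1}⁻¹ r`
with `r = E 𝟙`. Its solutions are `y_i = s_i z + u_i r`, where `s_i = a_i s_{i+1}`,
`u_i = a_i u_{i+1} + q_{i+1}⁻¹`, `s_i + k u_i = q_i⁻¹`, and `z` runs over the face `{E z = z}` of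
`Δ(k, 1)`, a copy of `Δ(d, 1)`. Choosing `n_i` so that `q_{i+1}/q_i` grows geometrically makes
`s_i > 0` and `u_i / s_i → 0`; the latter forces `z ≥ 0`.
-/
open Finset Filter Topology Matrix

section AffinelyHomeomorphic

variable {E F G : Type*} [AddCommGroup E] [Module ℝ E] [TopologicalSpace E]
  [AddCommGroup F] [Module ℝ F] [TopologicalSpace F]
  [AddCommGroup G] [Module ℝ G] [TopologicalSpace G] {S : Set E} {T : Set F} {U : Set G}

theorem AffinelyHomeomorphic.trans (hST : AffinelyHomeomorphic S T)
    (hTU : AffinelyHomeomorphic T U) : AffinelyHomeomorphic S U := by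
  obtain ⟨f, hf⟩ := hST
  obtain ⟨g, hg⟩ := hTU
  exact ⟨f.trans g, fun x y z t ht₀ ht₁ hz => hg _ _ _ t ht₀ ht₁ (hf x y z t ht₀ ht₁ hz)⟩

theorem AffinelyHomeomorphic.of_invOn (f : E → F) (g : F → E) (hf : Continuous f)
    (hg : Continuous g) (hfS : Set.MapsTo f S T) (hgT : Set.MapsTo g T S) (hfg : Set.InvOn g f S T)
    (hf_aff : ∀ x y (t : ℝ), f (t • x + (1 - t) • y) = t • f x + (1 - t) • f y) :
    AffinelyHomeomorphic S T :=
  ⟨{ toFun := hfS.restrict f S T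
     invFun := hgT.restrict g T S
     left_inv := fun x => Subtype.ext (hfg.1 x.2)
     right_inv := fun y => Subtype.ext (hfg.2 y.2)
     continuous_toFun := hf.restrict hfS
     continuous_invFun := hg.restrict hgT },
   fun _ _ _ _ _ _ hz => (congrArg f hz).trans (hf_aff _ _ _)⟩

end AffinelyHomeomorphic

section Collapse

variable {ι R : Type*} [DecidableEq ι]

def collapse [Zero R] [One R] (σ : ι → ι) : Matrix ι ι R :=
  Matrix.of fun t j => if σ j = t then 1 else 0

variable [CommSemiring R] (σ : ι → ι)

theorem collapse_apply (t j : ι) : (collapse σ : Matrix ι ι R) t j = if σ j = t then 1 else 0 :=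
  rfl

def bondingMatrix (c : R) : Matrix ι ι R :=
  c • collapse σ + Matrix.of fun _ _ => 1

theorem bondingMatrix_apply (c : R) (t j : ι) :
    bondingMatrix σ c t j = if σ j = t then c + 1 else 1 := by
  simp only [bondingMatrix, Matrix.add_apply, Matrix.smul_apply, collapse_apply, of_apply]
  split_ifs <;> simp

theorem bondingMatrix_map {S : Type*} [CommSemiring S] (f : R →+* S) (c : R) :
    (bondingMatrix σ c).map f = bondingMatrix σ (f c) := by
  ext t j
  simp [bondingMatrix_apply, apply_ite f]

variable [Fintype ι]

theorem sum_collapse_apply (j : ι) : ∑ t, (collapse σ : Matrix ι ι R) t j = 1 := by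
  simp [collapse_apply]

theorem collapse_mulVec_apply (w : ι → R) (t : ι) :
    (collapse σ *ᵥ w) t = ∑ j, if σ j = t then w j else 0 := by
  simp [mulVec, dotProduct, collapse_apply]

theorem sum_collapse_mulVec (w : ι → R) : ∑ t, (collapse σ *ᵥ w) t = ∑ j, w j := by
  simp_rw [collapse_mulVec_apply]
  rw [Finset.sum_comm]
  simp

theorem sum_bondingMatrix_apply (c : R) (j : ι) :
    ∑ t, bondingMatrix σ c t j = c + Fintype.card ι := by
  simp [bondingMatrix, sum_add_distrib, ← Finset.mul_sum, sum_collapse_apply]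

theorem collapse_mulVec_apply_of_notMem_range (w : ι → R) {t : ι} (ht : t ∉ Set.range σ) :
    (collapse σ *ᵥ w) t = 0 := by
  rw [collapse_mulVec_apply]
  exact Finset.sum_eq_zero fun j _ => if_neg fun h => ht ⟨j, h⟩

theorem bondingMatrix_mulVec (c : R) (w : ι → R) :
    bondingMatrix σ c *ᵥ w = c • collapse σ *ᵥ w + (∑ j, w j) • 1 := by
  rw [bondingMatrix, add_mulVec, smul_mulVec]
  congr 1
  ext t
  simp [mulVec, dotProduct]

variable {σ}

theorem collapse_mul_self (hσ : ∀ j, σ (σ j) = σ j) :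
    (collapse σ * collapse σ : Matrix ι ι R) = collapse σ := by
  ext t i
  simp [Matrix.mul_apply, collapse_apply, hσ]

theorem collapse_mulVec_collapse_mulVec (hσ : ∀ j, σ (σ j) = σ j) (w : ι → R) :
    collapse σ *ᵥ (collapse σ *ᵥ w) = collapse σ *ᵥ w := by
  rw [mulVec_mulVec, collapse_mul_self hσ]

theorem collapse_mulVec_eq_self (hσ : ∀ j, σ (σ j) = σ j) {w : ι → R}
    (hw : ∀ t ∉ Set.range σ, w t = 0) : collapse σ *ᵥ w = w := by
  ext t
  have hfix : ∀ {j}, j ∈ Set.range σ → σ j = j := by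
    rintro _ ⟨i, rfl⟩
    exact hσ i
  rw [collapse_mulVec_apply, Finset.sum_eq_single t]
  · by_cases ht : t ∈ Set.range σ
    · rw [if_pos (hfix ht)]
    · rw [hw t ht, ite_self]
  · intro j _ hjt
    by_cases hj : j ∈ Set.range σ
    · rw [if_neg (by rwa [hfix hj])]
    · rw [hw j hj, ite_self]
  · simp

end Collapse

def collapseFace {k : ℕ} (σ : Fin k → Fin k) : Set (Fin k → ℝ) :=
  {z | z ∈ simplexSet k 1 ∧ collapse σ *ᵥ z = z}

theorem Fintype.sum_extend_zero {ι κ M : Type*} [Fintype ι] [Fintype κ] [AddCommMonoid M]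
    {e : ι → κ} (he : Function.Injective e) (x : ι → M) :
    ∑ t, Function.extend e x 0 t = ∑ i, x i :=
  (Fintype.sum_of_injective e he x _ (fun t ht => Function.extend_apply' x (0 : κ → M) t ht)
    fun i => (he.extend_apply x 0 i).symm).symm

section Face

variable {d k : ℕ} {e : Fin d → Fin k} {ρ : Fin k → Fin d}

theorem apply_eq_zero_of_mem_collapseFace (hρ : Function.LeftInverse ρ e) {z : Fin k → ℝ}
    (hz : z ∈ collapseFace (e ∘ ρ)) {t : Fin k} (ht : t ∉ Set.range e) : z t = 0 := by
  rw [← hz.2]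
  exact collapse_mulVec_apply_of_notMem_range _ z (hρ.surjective.range_comp e ▸ ht)

theorem extend_zero_mem_collapseFace (hρ : Function.LeftInverse ρ e) {x : Fin d → ℝ}
    (hx : x ∈ simplexSet d 1) : Function.extend e x 0 ∈ collapseFace (e ∘ ρ) := by
  have hoff : ∀ t ∉ Set.range e, Function.extend e x 0 t = 0 := fun t ht =>
    Function.extend_apply' _ _ _ ht
  refine ⟨⟨fun t => ?_, by rw [Fintype.sum_extend_zero hρ.injective, hx.2]⟩,
    collapse_mulVec_eq_self (fun j => congrArg e (hρ (ρ j)))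
      (hρ.surjective.range_comp e ▸ hoff)⟩
  by_cases ht : t ∈ Set.range e
  · obtain ⟨i, rfl⟩ := ht
    rw [hρ.injective.extend_apply]
    exact hx.1 i
  · exact (hoff t ht).ge

theorem comp_mem_simplexSet (hρ : Function.LeftInverse ρ e) {z : Fin k → ℝ}
    (hz : z ∈ collapseFace (e ∘ ρ)) : z ∘ e ∈ simplexSet d 1 := by
  refine ⟨fun i => hz.1.1 (e i), ?_⟩
  rw [← hz.1.2]
  exact Fintype.sum_of_injective e hρ.injective _ z
    (fun _ ht => apply_eq_zero_of_mem_collapseFace hρ hz ht) fun _ => rfl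

theorem affinelyHomeomorphic_simplexSet_collapseFace_comp (hρ : Function.LeftInverse ρ e) :
    AffinelyHomeomorphic (simplexSet d 1) (collapseFace (e ∘ ρ)) := by
  refine AffinelyHomeomorphic.of_invOn (Function.ExtendByZero.linearMap ℝ e) (· ∘ e)
    (LinearMap.continuous_of_finiteDimensional _) (by fun_prop)
    (fun _ hx => extend_zero_mem_collapseFace hρ hx) (fun _ hz => comp_mem_simplexSet hρ hz)
    ⟨fun x _ => funext (hρ.injective.extend_apply x 0), fun z hz => funext fun t => ?_⟩
    (fun x y t => by rw [map_add, map_smul, map_smul])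
  by_cases ht : t ∈ Set.range e
  · obtain ⟨i, rfl⟩ := ht
    exact hρ.injective.extend_apply _ 0 i
  · exact (Function.extend_apply' _ _ _ ht).trans (apply_eq_zero_of_mem_collapseFace hρ hz ht).symm

end Face

theorem exists_affinelyHomeomorphic_simplexSet_collapseFace {d k : ℕ} (hd : 1 ≤ d)
    (hdk : d ≤ k) : ∃ σ : Fin k → Fin k,
      (∀ j, σ (σ j) = σ j) ∧ AffinelyHomeomorphic (simplexSet d 1) (collapseFace σ) := by
  have : Nonempty (Fin d) := ⟨⟨0, hd⟩⟩
  obtain ⟨ρ, hρ⟩ := (Fin.castLE_injective hdk).hasLeftInverse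
  exact ⟨Fin.castLE hdk ∘ ρ, fun j => congrArg (Fin.castLE hdk) (hρ (ρ j)),
    affinelyHomeomorphic_simplexSet_collapseFace_comp hρ⟩

structure IsScaleOffset (q a : ℕ → ℝ) (k : ℝ) (s u : ℕ → ℝ) : Prop where
  scale_pos : ∀ i, 0 < s i
  offset_nonneg : ∀ i, 0 ≤ u i
  scale_succ : ∀ i, s i = a i * s (i + 1)
  offset_succ : ∀ i, u i = a i * u (i + 1) + (q (i + 1))⁻¹
  scale_add_offset : ∀ i, s i + k * u i = (q i)⁻¹
  tendsto_offset_div_scale : Tendsto (fun i => u i / s i) atTop (𝓝 0)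

def invLimit {k : ℕ} (q : ℕ → ℕ) (A : ℕ → Matrix (Fin k) (Fin k) ℝ) : Set (ℕ → Fin k → ℝ) :=
  {v | (∀ i, v i ∈ simplexSet k (q i)) ∧ ∀ i, v i = A i *ᵥ v (i + 1)}

section InverseLimit

variable {k : ℕ} (σ : Fin k → Fin k) (q : ℕ → ℕ) (a s u : ℕ → ℝ)

noncomputable def collapseThread (z : Fin k → ℝ) (i : ℕ) : Fin k → ℝ :=
  s i • z + (a i * u (i + 1)) • collapse σ *ᵥ 1 + (q (i + 1) : ℝ)⁻¹ • 1

noncomputable def threadCoord (v : ℕ → Fin k → ℝ) : Fin k → ℝ :=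
  (s 0)⁻¹ • (collapse σ *ᵥ v 0 - u 0 • collapse σ *ᵥ 1)

variable {σ q a s u}

theorem collapse_mulVec_collapseThread (hσ : ∀ j, σ (σ j) = σ j)
    (h : IsScaleOffset (fun i => (q i : ℝ)) a k s u) {z : Fin k → ℝ}
    (hz : collapse σ *ᵥ z = z) (i : ℕ) :
    collapse σ *ᵥ collapseThread σ q a s u z i = s i • z + u i • collapse σ *ᵥ 1 := by
  simp only [collapseThread, mulVec_add, mulVec_smul, hz, collapse_mulVec_collapse_mulVec hσ,
    h.offset_succ i]
  module

theorem sum_collapseThread (h : IsScaleOffset (fun i => (q i : ℝ)) a k s u) {z : Fin k → ℝ}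
    (hz : ∑ t, z t = 1) (i : ℕ) : ∑ t, collapseThread σ q a s u z i t = (q i : ℝ)⁻¹ := by
  have hr : ∑ t, (collapse σ *ᵥ (1 : Fin k → ℝ)) t = k := by simp [sum_collapse_mulVec]
  simp only [collapseThread, Pi.add_apply, Pi.smul_apply, smul_eq_mul, sum_add_distrib,
    ← mul_sum, hz, hr, Pi.one_apply, sum_const, card_univ, Fintype.card_fin, nsmul_eq_mul]
  rw [← h.scale_add_offset i, h.offset_succ i]
  ring

theorem collapse_mulVec_nonneg {w : Fin k → ℝ} (hw : ∀ j, 0 ≤ w j) (t : Fin k) :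
    0 ≤ (collapse σ *ᵥ w) t := by
  rw [collapse_mulVec_apply]
  exact sum_nonneg fun j _ => by split_ifs; exacts [hw j, le_rfl]

theorem collapseThread_mem_invLimit (hσ : ∀ j, σ (σ j) = σ j)
    (h : IsScaleOffset (fun i => (q i : ℝ)) a k s u) (ha : ∀ i, 0 < a i) {z : Fin k → ℝ}
    (hz : z ∈ collapseFace σ) :
    collapseThread σ q a s u z ∈ invLimit q fun i => bondingMatrix σ (a i) := by
  obtain ⟨⟨hz_nonneg, hz_sum⟩, hz_fix⟩ := hz
  rw [Nat.cast_one, div_one] at hz_sum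
  refine ⟨fun i => ⟨fun t => ?_, by rw [sum_collapseThread h hz_sum, one_div]⟩, fun i => ?_⟩
  · simp only [collapseThread, Pi.add_apply, Pi.smul_apply, smul_eq_mul, Pi.one_apply, mul_one]
    exact add_nonneg (add_nonneg (mul_nonneg (h.scale_pos i).le (hz_nonneg t))
      (mul_nonneg (mul_nonneg (ha i).le (h.offset_nonneg _))
        (collapse_mulVec_nonneg (w := 1) (fun _ => zero_le_one) t)))
      (inv_nonneg.2 (Nat.cast_nonneg _))
  · rw [bondingMatrix_mulVec, collapse_mulVec_collapseThread hσ h hz_fix,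
      sum_collapseThread h hz_sum, collapseThread, h.scale_succ i]
    module

theorem eq_of_mem_invLimit {v : ℕ → Fin k → ℝ}
    (hv : v ∈ invLimit q fun i => bondingMatrix σ (a i)) (i : ℕ) :
    v i = a i • collapse σ *ᵥ v (i + 1) + (q (i + 1) : ℝ)⁻¹ • 1 := by
  rw [hv.2 i, bondingMatrix_mulVec, (hv.1 (i + 1)).2, one_div]

theorem collapse_mulVec_of_mem_invLimit (hσ : ∀ j, σ (σ j) = σ j)
    (h : IsScaleOffset (fun i => (q i : ℝ)) a k s u) (ha : ∀ i, 0 < a i) {v : ℕ → Fin k → ℝ}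
    (hv : v ∈ invLimit q fun i => bondingMatrix σ (a i)) (i : ℕ) :
    collapse σ *ᵥ v i = s i • threadCoord σ s u v + u i • collapse σ *ᵥ 1 := by
  induction i with
  | zero =>
    rw [threadCoord, smul_smul, mul_inv_cancel₀ (h.scale_pos 0).ne', one_smul, sub_add_cancel]
  | succ i ih =>
    have hstep : collapse σ *ᵥ v i =
        a i • collapse σ *ᵥ v (i + 1) + (q (i + 1) : ℝ)⁻¹ • collapse σ *ᵥ 1 := by
      conv_lhs => rw [eq_of_mem_invLimit hv i]
      rw [mulVec_add, mulVec_smul, mulVec_smul, collapse_mulVec_collapse_mulVec hσ]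
    refine smul_right_injective _ (ha i).ne' ?_
    change a i • _ = a i • _
    rw [← sub_eq_of_eq_add hstep, ih, h.scale_succ i, h.offset_succ i]
    module

theorem threadCoord_mem_collapseFace (hσ : ∀ j, σ (σ j) = σ j)
    (h : IsScaleOffset (fun i => (q i : ℝ)) a k s u) (ha : ∀ i, 0 < a i) {v : ℕ → Fin k → ℝ}
    (hv : v ∈ invLimit q fun i => bondingMatrix σ (a i)) :
    threadCoord σ s u v ∈ collapseFace σ := by
  have hE := collapse_mulVec_of_mem_invLimit hσ h ha hv
  refine ⟨⟨fun t => ?_, ?_⟩, ?_⟩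
  · have hlower : ∀ i, -(u i / s i * (collapse σ *ᵥ 1) t) ≤ threadCoord σ s u v t := fun i => by
      have hy := collapse_mulVec_nonneg (σ := σ) (hv.1 i).1 t
      have hs := h.scale_pos i
      rw [hE i, Pi.add_apply, Pi.smul_apply, Pi.smul_apply, smul_eq_mul, smul_eq_mul,
        ← mul_div_cancel_left₀ (u i) hs.ne', mul_div_assoc, mul_assoc, ← mul_add] at hy
      linarith [(mul_nonneg_iff_of_pos_left hs).1 hy]
    have hlim : Tendsto (fun i => -(u i / s i * (collapse σ *ᵥ 1) t)) atTop (𝓝 0) := by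
      simpa using (h.tendsto_offset_div_scale.mul_const _).neg
    exact le_of_tendsto' hlim hlower
  · have hsum := congrArg (fun w => ∑ t, w t) (hE 0)
    simp only [sum_collapse_mulVec, (hv.1 0).2, Pi.add_apply, Pi.smul_apply, smul_eq_mul,
      sum_add_distrib, ← mul_sum, Pi.one_apply, sum_const, card_univ, Fintype.card_fin,
      nsmul_eq_mul, mul_one, one_div, ← h.scale_add_offset 0] at hsum
    rw [Nat.cast_one, div_one]
    exact mul_left_cancel₀ (h.scale_pos 0).ne' (by linarith)
  · rw [threadCoord, mulVec_smul, mulVec_sub, mulVec_smul, collapse_mulVec_collapse_mulVec hσ,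
      collapse_mulVec_collapse_mulVec hσ]

theorem collapseThread_threadCoord (hσ : ∀ j, σ (σ j) = σ j)
    (h : IsScaleOffset (fun i => (q i : ℝ)) a k s u) (ha : ∀ i, 0 < a i) {v : ℕ → Fin k → ℝ}
    (hv : v ∈ invLimit q fun i => bondingMatrix σ (a i)) :
    collapseThread σ q a s u (threadCoord σ s u v) = v := by
  funext i
  rw [eq_of_mem_invLimit hv i, collapse_mulVec_of_mem_invLimit hσ h ha hv, collapseThread,
    h.scale_succ i]
  module

theorem threadCoord_collapseThread (hσ : ∀ j, σ (σ j) = σ j)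
    (h : IsScaleOffset (fun i => (q i : ℝ)) a k s u) {z : Fin k → ℝ}
    (hz : collapse σ *ᵥ z = z) : threadCoord σ s u (collapseThread σ q a s u z) = z := by
  rw [threadCoord, collapse_mulVec_collapseThread hσ h hz, add_sub_cancel_right, smul_smul,
    inv_mul_cancel₀ (h.scale_pos 0).ne', one_smul]

theorem affinelyHomeomorphic_collapseFace_invLimit (hσ : ∀ j, σ (σ j) = σ j)
    (h : IsScaleOffset (fun i => (q i : ℝ)) a k s u) (ha : ∀ i, 0 < a i) :
    AffinelyHomeomorphic (collapseFace σ)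
      (invLimit q fun i => bondingMatrix σ (a i)) :=
  AffinelyHomeomorphic.of_invOn (collapseThread σ q a s u) (threadCoord σ s u)
    (by unfold collapseThread; fun_prop) (by unfold threadCoord; fun_prop)
    (fun _ hz => collapseThread_mem_invLimit hσ h ha hz)
    (fun _ hv => threadCoord_mem_collapseFace hσ h ha hv)
    ⟨fun _ hz => threadCoord_collapseThread hσ h hz.2,
      fun _ hv => collapseThread_threadCoord hσ h ha hv⟩
    (fun x y t => by funext i; simp only [collapseThread, Pi.add_apply, Pi.smul_apply]; module)

end InverseLimit

section ScaleOffset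

variable {q a : ℕ → ℝ} {k : ℝ}

theorem inv_eq_prod_div_add_mul_sum (hq : ∀ i, q i ≠ 0) (hqa : ∀ i, q (i + 1) = (a i + k) * q i)
    (i : ℕ) : (q 0)⁻¹ =
      (∏ l ∈ range i, a l) / q i + k * ∑ l ∈ range i, (∏ m ∈ range l, a m) / q (l + 1) := by
  induction i with
  | zero => simp
  | succ i ih =>
    have hak : a i + k ≠ 0 := left_ne_zero_of_mul ((hqa i) ▸ hq (i + 1))
    rw [ih, prod_range_succ, sum_range_succ, hqa i]
    field_simp [hq i]
    ring

theorem prod_div_succ_le (hk : 0 ≤ k) (hq : ∀ i, 0 < q i) (ha : ∀ i, 0 ≤ a i)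
    (hqa : ∀ i, q (i + 1) = (a i + k) * q i) (l : ℕ) :
    (∏ m ∈ range l, a m) / q (l + 1) ≤ (q 0)⁻¹ * (a l + k)⁻¹ := by
  have hle : (∏ m ∈ range l, a m) / q l ≤ (q 0)⁻¹ := by
    rw [inv_eq_prod_div_add_mul_sum (fun i => (hq i).ne') hqa l]
    exact le_add_of_nonneg_right (mul_nonneg hk (sum_nonneg fun m _ =>
      div_nonneg (prod_nonneg fun n _ => ha n) (hq (m + 1)).le))
  rw [hqa l, mul_comm, ← div_div, div_eq_mul_inv]
  exact mul_le_mul_of_nonneg_right hle (inv_nonneg.2 (add_nonneg (ha l) hk))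

theorem exists_isScaleOffset (hk : 0 < k) (hq : ∀ i, 0 < q i) (ha : ∀ i, 0 < a i)
    (hqa : ∀ i, q (i + 1) = (a i + k) * q i) (hsum : Summable fun l => (a l + k)⁻¹)
    (hlt : k * ∑' l, (a l + k)⁻¹ < 1) : ∃ s u, IsScaleOffset q a k s u := by
  set P : ℕ → ℝ := fun i => ∏ l ∈ range i, a l
  set c : ℕ → ℝ := fun l => P l / q (l + 1)
  have hP : ∀ i, 0 < P i := fun i => prod_pos fun l _ => ha l
  have hc_nonneg : ∀ l, 0 ≤ c l := fun l => div_nonneg (hP l).le (hq (l + 1)).le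
  have hc_le : ∀ l, c l ≤ (q 0)⁻¹ * (a l + k)⁻¹ :=
    prod_div_succ_le hk.le hq (fun i => (ha i).le) hqa
  have hP_succ : ∀ i, P (i + 1) = P i * a i := fun i => prod_range_succ _ _
  have hc : Summable c := (hsum.mul_left (q 0)⁻¹).of_nonneg_of_le hc_nonneg hc_le
  set T := ∑' l, c l
  have hs₀ : 0 < (q 0)⁻¹ - k * T := by
    have : T ≤ (q 0)⁻¹ * ∑' l, (a l + k)⁻¹ := by
      rw [← tsum_mul_left]
      exact hc.tsum_le_tsum hc_le (hsum.mul_left _)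
    have := inv_pos.2 (hq 0)
    nlinarith
  refine ⟨fun i => ((q 0)⁻¹ - k * T) / P i, fun i => (T - ∑ l ∈ range i, c l) / P i,
    ⟨fun i => div_pos hs₀ (hP i), fun i => div_nonneg ?_ (hP i).le, fun i => ?_, fun i => ?_,
      fun i => ?_, ?_⟩⟩
  · exact sub_nonneg.2 (hc.sum_le_tsum _ fun l _ => hc_nonneg l)
  · rw [hP_succ]
    field_simp [(hP i).ne', (ha i).ne']
  · rw [hP_succ, sum_range_succ, show c i = P i / q (i + 1) from rfl]
    field_simp [(hP i).ne', (ha i).ne', (hq (i + 1)).ne']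
    ring
  · rw [inv_eq_prod_div_add_mul_sum (fun i => (hq i).ne') hqa i]
    field_simp [(hP i).ne', (hq i).ne']
    ring
  · have hlim : Tendsto (fun i => (T - ∑ l ∈ range i, c l) / ((q 0)⁻¹ - k * T)) atTop (𝓝 0) := by
      have := (hc.hasSum.tendsto_sum_nat.const_sub T).div_const ((q 0)⁻¹ - k * T)
      rwa [sub_self, zero_div] at this
    refine hlim.congr fun i => ?_
    field_simp [(hP i).ne', hs₀.ne']

end ScaleOffset

theorem summable_inv_and_mul_tsum_inv_lt_one {b : ℕ → ℝ} {k : ℝ} (hk : 0 < k)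
    (hb : ∀ l, 2 ^ (l + 2) * k ≤ b l) :
    Summable (fun l => (b l)⁻¹) ∧ k * ∑' l, (b l)⁻¹ < 1 := by
  have hle : ∀ l, (b l)⁻¹ ≤ (4 * k)⁻¹ * (1 / 2) ^ l := fun l => by
    have h4 : (4 * k)⁻¹ * (1 / 2) ^ l = (2 ^ (l + 2) * k)⁻¹ := by
      rw [pow_add, one_div, inv_pow, mul_inv, mul_inv]
      norm_num
      ring
    rw [h4]
    exact inv_anti₀ (by positivity) (hb l)
  have hgeom : Summable fun l : ℕ => (4 * k)⁻¹ * (1 / 2 : ℝ) ^ l :=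
    (summable_geometric_two).mul_left _
  have hsum : Summable fun l => (b l)⁻¹ :=
    hgeom.of_nonneg_of_le (fun l => (inv_pos.2 (lt_of_lt_of_le (by positivity) (hb l))).le) hle
  refine ⟨hsum, ?_⟩
  have := hsum.tsum_le_tsum hle hgeom
  rw [tsum_mul_left, tsum_geometric_two] at this
  calc k * ∑' l, (b l)⁻¹ ≤ k * ((4 * k)⁻¹ * 2) := by gcongr
    _ < 1 := by field_simp; norm_num

section Subsequence

variable {p : ℕ → ℕ}

theorem two_pow_mul_le_of_dvd_succ (hpmono : StrictMono p) (hpdvd : ∀ n, p n ∣ p (n + 1))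
    (n c : ℕ) : 2 ^ c * p n ≤ p (n + c) := by
  induction c with
  | zero => simp
  | succ c ih =>
    have hdouble : p (n + c) ≤ p (n + c + 1) - p (n + c) :=
      Nat.le_of_dvd (Nat.sub_pos_of_lt (hpmono (n + c).lt_succ_self))
        (Nat.dvd_sub (hpdvd (n + c)) dvd_rfl)
    rw [pow_succ, mul_comm _ 2, mul_assoc, ← add_assoc]
    omega

theorem exists_strictMono_ratio_ge (hp0 : ∀ n, 0 < p n) (hpmono : StrictMono p)
    (hpdvd : ∀ n, p n ∣ p (n + 1)) (g : ℕ → ℕ) :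
    ∃ ni m : ℕ → ℕ, StrictMono ni ∧ ∀ i, g i ≤ m i ∧ m i * p (ni i) = p (ni (i + 1)) := by
  set ni : ℕ → ℕ := fun i => ∑ j ∈ range i, (g j + 1)
  have hni_succ : ∀ i, ni (i + 1) = ni i + (g i + 1) := fun i => sum_range_succ _ _
  have hni : StrictMono ni := strictMono_nat_of_lt_succ fun i => by rw [hni_succ]; omega
  choose m hm using fun i : ℕ =>
    Nat.rel_of_forall_rel_succ_of_le (· ∣ ·) hpdvd (hni i.lt_succ_self).le
  refine ⟨ni, m, hni, fun i => ⟨Nat.le_of_mul_le_mul_right ?_ (hp0 (ni i)), by rw [hm, mul_comm]⟩⟩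
  calc g i * p (ni i) ≤ 2 ^ (g i + 1) * p (ni i) :=
        Nat.mul_le_mul_right _ (Nat.lt_two_pow_self.trans (Nat.pow_lt_pow_succ one_lt_two)).le
    _ ≤ p (ni (i + 1)) := hni_succ i ▸ two_pow_mul_le_of_dvd_succ hpmono hpdvd _ _
    _ = m i * p (ni i) := by rw [hm, mul_comm]

end Subsequence

theorem isManaged_bondingMatrix {k : ℕ} (σ : Fin k → Fin k) {q a : ℕ → ℕ}
    (hq0 : ∀ i, 0 < q i) (hq : StrictMono q) (hk : 2 ≤ k)
    (hqa : ∀ i, (a i + k) * q i = q (i + 1)) :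
    IsManaged q (fun _ => k) fun i => bondingMatrix σ (a i : ℤ) := by
  refine ⟨hq0, hq, fun i => ⟨a i + k, by rw [← hqa, mul_comm]⟩, fun _ => hk, fun i t j => ?_,
    fun i j => ?_⟩
  · change 0 < bondingMatrix σ (a i : ℤ) t j
    rw [bondingMatrix_apply]
    split_ifs <;> positivity
  · change (∑ t, bondingMatrix σ (a i : ℤ) t j) * _ = _
    rw [sum_bondingMatrix_apply, Fintype.card_fin]
    exact_mod_cast hqa i

theorem stmt13 (d : ℕ) (hd : 1 ≤ d) (p : ℕ → ℕ)
    (hp0 : ∀ n, 0 < p n) (hpmono : StrictMono p) (hpdvd : ∀ n, p n ∣ p (n + 1))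
    (k : ℕ) (hk2 : 2 ≤ k) (hkd : d ≤ k) :
    ∃ (ni : ℕ → ℕ) (M : ℕ → Matrix (Fin k) (Fin k) ℤ),
      StrictMono ni ∧
      IsManaged (fun i => p (ni i)) (fun _ => k) M ∧
      AffinelyHomeomorphic (simplexSet d 1)
        {v : ℕ → (Fin k → ℝ) |
          (∀ i, v i ∈ simplexSet k (p (ni i))) ∧
          ∀ i, v i = ((M i).map (Int.cast : ℤ → ℝ)).mulVec (v (i + 1))} := by
  obtain ⟨ni, m, hni, hm⟩ := exists_strictMono_ratio_ge hp0 hpmono hpdvd fun i => 2 ^ (i + 2) * k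
  have hkm : ∀ i, k < m i := fun i =>
    (lt_mul_of_one_lt_left (by omega) (Nat.one_lt_two_pow (by omega))).trans_le (hm i).1
  set a : ℕ → ℕ := fun i => m i - k
  have hak : ∀ i, a i + k = m i := fun i => Nat.sub_add_cancel (hkm i).le
  have hqa : ∀ i, (a i + k) * p (ni i) = p (ni (i + 1)) := fun i => by rw [hak, (hm i).2]
  have ha : ∀ i, (0 : ℝ) < a i := fun i => Nat.cast_pos.2 (Nat.sub_pos_of_lt (hkm i))
  have hk : (0 : ℝ) < k := Nat.cast_pos.2 (by omega)
  obtain ⟨hsum, hlt⟩ := summable_inv_and_mul_tsum_inv_lt_one (b := fun l => (a l : ℝ) + k) hk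
    fun l => by rw [← Nat.cast_add, hak l]; exact_mod_cast (hm l).1
  obtain ⟨s, u, hsu⟩ := exists_isScaleOffset (q := fun i => (p (ni i) : ℝ)) hk
    (fun i => Nat.cast_pos.2 (hp0 (ni i))) ha (fun i => by exact_mod_cast (hqa i).symm) hsum hlt
  obtain ⟨σ, hσ, hface⟩ := exists_affinelyHomeomorphic_simplexSet_collapseFace hd hkd
  refine ⟨ni, fun i => bondingMatrix σ (a i : ℤ), hni,
    isManaged_bondingMatrix σ (fun i => hp0 (ni i)) (hpmono.comp hni) hk2 hqa, ?_⟩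
  have hmap : ∀ i, (bondingMatrix σ (a i : ℤ)).map (Int.cast : ℤ → ℝ) = bondingMatrix σ (a i : ℝ) :=
    fun i => by simpa using bondingMatrix_map σ (Int.castRingHom ℝ) (a i : ℤ)
  simp only [hmap]
  exact hface.trans (affinelyHomeomorphic_collapseFace_invLimit hσ hsu ha)
end
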